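/- Let Γ be a countable group and μ a probability measure on Γ whose support generates Γ, with finite entropy H(μ), such that the associated random walk is transient. Then for every n ≥ 0, E[d_G(e, Z_n)] ≤ E[−ln μ^n(Z_n)] = H(μ^n); consequently Σ_{x∈Γ} μ^n(x) · (−ln Σ_{k≥0} μ^k(x)) + ln G(e,e) ≤ H(μ^n) for all n. -/

import Mathlib

/-!
Write `p_n(x) = ℙ[Z_n = x]`. Since `p_n(x) ≤ F(e, x)`, the Green distance `-ln F(e, Z_n)` is
at most `-ln p_n(Z_n)`, whose expectation is `H(μⁿ)`. This is finite: by independence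
`p_n(Z_n) ≥ ∏_{i<n} μ(X_i)`, so `-ln p_n(Z_n)` is dominated by `Σ_{i<n} -ln μ(X_i)`, of
expectation `n H(μ)`.

For the last inequality, restarting the walk at time `n` gives `p_n(x) G(e,e) ≤ G(e,x)`, and
decomposing at the first visit to `x` gives `G(e,x) ≤ F(e,x) G(e,e) ≤ G(e,e)`. Hence
`0 ≤ p_n(x) ln (G(e,e) / G(e,x)) ≤ -p_n(x) ln p_n(x)` for every `x`; summing over `x` and
using `Σ_x p_n(x) = 1` gives the claim.
-/

open MeasureTheory ProbabilityTheory Filter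
open scoped ENNReal

noncomputable section

variable {Γ Ω : Type*}

/-- Position at time `n` of the random walk started at `x` with i.i.d. increments
`X 0, X 1, …` : `Z_n = x * X_0 * X_1 * ⋯ * X_{n-1}` (ordered product). -/
def walk [Group Γ] (x : Γ) (X : ℕ → Ω → Γ) (n : ℕ) (ω : Ω) : Γ :=
  x * ((List.range n).map fun k => X k ω).prod

/-- Hitting probability `F(x,y) = ℙ^x[∃ n ≥ 0, Z_n = y]`. -/
def hitProb [Group Γ] [MeasurableSpace Ω] (P : Measure Ω) (X : ℕ → Ω → Γ) (x y : Γ) : ℝ≥0∞ :=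
  P {ω | ∃ n : ℕ, walk x X n ω = y}

/-- Green metric `d_G(x,y) = -ln F(x,y)`. -/
def greenDist [Group Γ] [MeasurableSpace Ω] (P : Measure Ω) (X : ℕ → Ω → Γ) (x y : Γ) : ℝ :=
  - Real.log (hitProb P X x y).toReal

/-- Green function `G(x,y) = Σ_{n≥0} ℙ^x[Z_n = y]`. -/
def greenFn [Group Γ] [MeasurableSpace Ω] (P : Measure Ω) (X : ℕ → Ω → Γ) (x y : Γ) : ℝ≥0∞ :=
  ∑' n : ℕ, P {ω | walk x X n ω = y}

/-- Martin kernel `K(x,y) = G(x,y)/G(e,y)` (real-valued; `G` is finite by transience). -/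
def martinK [Group Γ] [MeasurableSpace Ω] (P : Measure Ω) (X : ℕ → Ω → Γ) (x y : Γ) : ℝ :=
  (greenFn P X x y).toReal / (greenFn P X 1 y).toReal

/-- Word ball of radius `n` for the generating set `S` : elements expressible as a
product of at most `n` generators. -/
def wordBall [Group Γ] (S : Finset Γ) (n : ℕ) : Set Γ :=
  {x | ∃ l : List Γ, l.length ≤ n ∧ (∀ g ∈ l, g ∈ (S : Set Γ)) ∧ l.prod = x}

open Finset.HasAntidiagonal

lemma ENNReal.tsum_mul_tsum_eq_tsum_sum_antidiagonal {A : Type*} [AddCommMonoid A]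
    [Finset.HasAntidiagonal A] (f g : A → ℝ≥0∞) :
    (∑' n, f n) * ∑' n, g n = ∑' n, ∑ kl ∈ antidiagonal n, f kl.1 * g kl.2 := by
  simp_rw [← ENNReal.tsum_mul_right, ← ENNReal.tsum_mul_left]
  rw [← ENNReal.tsum_prod, ← Finset.HasAntidiagonal.sigmaAntidiagonalEquivProd.tsum_eq,
    ENNReal.tsum_sigma']
  exact tsum_congr fun n => Finset.tsum_subtype (antidiagonal n) fun kl => f kl.1 * g kl.2

lemma ENNReal.toReal_le_one {a : ℝ≥0∞} (ha : a ≤ 1) : a.toReal ≤ 1 := by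
  simpa using ENNReal.toReal_mono ENNReal.one_ne_top ha

lemma neg_log_toReal_nonneg {a : ℝ≥0∞} (ha : a ≤ 1) : 0 ≤ -Real.log a.toReal :=
  neg_nonneg.2 (Real.log_nonpos ENNReal.toReal_nonneg (ENNReal.toReal_le_one ha))

lemma negMulLog_toReal_nonneg {a : ℝ≥0∞} (ha : a ≤ 1) : 0 ≤ Real.negMulLog a.toReal :=
  Real.negMulLog_nonneg ENNReal.toReal_nonneg (ENNReal.toReal_le_one ha)

lemma toReal_mul_log_sub_log_mem_Icc {p G T : ℝ≥0∞} (hp : p ≤ 1) (hT : 1 ≤ T)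
    (hlow : p * T ≤ G) (hup : G ≤ T) :
    p.toReal * (Real.log T.toReal - Real.log G.toReal) ∈ Set.Icc 0 (Real.negMulLog p.toReal) := by
  rcases eq_or_ne p 0 with rfl | hp0
  · simp
  rcases eq_or_ne T ⊤ with rfl | hT'
  · -- then `G = ⊤` too, and the middle term is `0` since `ENNReal.toReal ⊤ = 0` and `log 0 = 0`
    obtain rfl : G = ⊤ := top_le_iff.1 (by simpa [ENNReal.mul_top hp0] using hlow)
    simpa using negMulLog_toReal_nonneg hp
  have hq : 0 < p.toReal := ENNReal.toReal_pos hp0 (ne_top_of_le_ne_top ENNReal.one_ne_top hp)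
  have ht : 1 ≤ T.toReal := by simpa using ENNReal.toReal_mono hT' hT
  have hgt : G.toReal ≤ T.toReal := ENNReal.toReal_mono hT' hup
  have hqtg : p.toReal * T.toReal ≤ G.toReal := by
    rw [← ENNReal.toReal_mul]; exact ENNReal.toReal_mono (ne_top_of_le_ne_top hT' hup) hlow
  have hg : 0 < G.toReal := (by positivity : 0 < p.toReal * T.toReal).trans_le hqtg
  have hlog : Real.log p.toReal + Real.log T.toReal ≤ Real.log G.toReal := by
    rw [← Real.log_mul hq.ne' (by positivity)]; exact Real.log_le_log (by positivity) hqtg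
  refine ⟨mul_nonneg hq.le (sub_nonneg.2 (Real.log_le_log hg hgt)), ?_⟩
  calc p.toReal * (Real.log T.toReal - Real.log G.toReal) ≤ p.toReal * -Real.log p.toReal :=
        mul_le_mul_of_nonneg_left (by linarith) hq.le
    _ = Real.negMulLog p.toReal := by rw [Real.negMulLog]; ring

lemma tsum_toReal_mul_neg_log_add_log_le {ι : Type*} {p G : ι → ℝ≥0∞} {T : ℝ≥0∞}
    (hp : ∑' i, p i = 1) (hH : Summable fun i => Real.negMulLog (p i).toReal) (hT : 1 ≤ T)
    (hlow : ∀ i, p i * T ≤ G i) (hup : ∀ i, G i ≤ T) :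
    ∑' i, (p i).toReal * -Real.log (G i).toReal + Real.log T.toReal
      ≤ ∑' i, Real.negMulLog (p i).toReal := by
  have hp1 : ∀ i, p i ≤ 1 := fun i => hp ▸ ENNReal.le_tsum i
  have hbounds := fun i => toReal_mul_log_sub_log_mem_Icc (hp1 i) hT (hlow i) (hup i)
  have hc : Summable fun i => (p i).toReal * (Real.log T.toReal - Real.log (G i).toReal) :=
    hH.of_nonneg_of_le (fun i => (hbounds i).1) fun i => (hbounds i).2
  have hpsum : Summable fun i => (p i).toReal := ENNReal.summable_toReal (by simp [hp])
  have hptsum : ∑' i, (p i).toReal = 1 := by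
    rw [← ENNReal.tsum_toReal_eq fun i => ne_top_of_le_ne_top ENNReal.one_ne_top (hp1 i), hp,
      ENNReal.toReal_one]
  calc ∑' i, (p i).toReal * -Real.log (G i).toReal + Real.log T.toReal
      = ∑' i, ((p i).toReal * (Real.log T.toReal - Real.log (G i).toReal)
          - (p i).toReal * Real.log T.toReal) + Real.log T.toReal := by
        congr 2 with i; ring
    _ = ∑' i, (p i).toReal * (Real.log T.toReal - Real.log (G i).toReal) := by
        rw [hc.tsum_sub (hpsum.mul_right _), tsum_mul_right, hptsum]; ring
    _ ≤ ∑' i, Real.negMulLog (p i).toReal := hc.tsum_le_tsum (fun i => (hbounds i).2) hH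

section DiscreteEntropy

variable {α : Type*} [MeasurableSpace α] [Countable α]

lemma ae_measure_singleton_ne_zero (ν : Measure α) : ∀ᵐ a ∂ν, ν {a} ≠ 0 := by
  rw [ae_iff]
  simp only [not_not]
  rw [← Set.biUnion_of_singleton {a | ν {a} = 0}, measure_biUnion_null_iff (Set.to_countable _)]
  exact fun _ h => h

variable [MeasurableSingletonClass α]

lemma tsum_measure_singleton (ν : Measure α) : ∑' a, ν {a} = ν Set.univ := by
  simpa using (lintegral_countable' (μ := ν) 1).symm

variable (ν : Measure α) [IsProbabilityMeasure ν]

lemma integrable_neg_log_measure_singleton_iff :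
    Integrable (fun a => -Real.log (ν {a}).toReal) ν
      ↔ Summable fun a => Real.negMulLog (ν {a}).toReal := by
  have hnonneg : ∀ a, 0 ≤ -Real.log (ν {a}).toReal := fun a => neg_log_toReal_nonneg prob_le_one
  have hlint : ∫⁻ a, ENNReal.ofReal (-Real.log (ν {a}).toReal) ∂ν
      = ∑' a, ENNReal.ofReal (Real.negMulLog (ν {a}).toReal) := by
    rw [lintegral_countable']
    refine tsum_congr fun a => ?_
    rw [Real.negMulLog, neg_mul, ← mul_neg, ENNReal.ofReal_mul ENNReal.toReal_nonneg,
      ENNReal.ofReal_toReal (measure_ne_top ν {a}), mul_comm]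
  rw [Integrable, hasFiniteIntegral_iff_ofReal (ae_of_all _ hnonneg), hlint]
  refine ⟨fun h => ?_, fun h => ⟨Measurable.of_discrete.aestronglyMeasurable, h.tsum_ofReal_lt_top⟩⟩
  exact (ENNReal.summable_toReal h.2.ne).congr fun a =>
    ENNReal.toReal_ofReal (negMulLog_toReal_nonneg prob_le_one)

lemma integral_neg_log_measure_singleton :
    ∫ a, -Real.log (ν {a}).toReal ∂ν = ∑' a, Real.negMulLog (ν {a}).toReal := by
  by_cases h : Integrable (fun a => -Real.log (ν {a}).toReal) ν
  · rw [integral_countable h]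
    exact tsum_congr fun a => by rw [measureReal_def, smul_eq_mul, Real.negMulLog]; ring
  · rw [integral_undef h,
      tsum_eq_zero_of_not_summable ((integrable_neg_log_measure_singleton_iff ν).not.1 h)]

end DiscreteEntropy

section RandomVariable

variable {α : Type*} [MeasurableSpace α] [Countable α] [MeasurableSpace Ω] {P : Measure Ω}
  {Y : Ω → α}

lemma ae_map_singleton_ne_zero (hY : Measurable Y) : ∀ᵐ ω ∂P, (P.map Y) {Y ω} ≠ 0 :=
  ae_of_ae_map hY.aemeasurable (ae_measure_singleton_ne_zero _)

variable [MeasurableSingletonClass α]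

lemma Measurable.aestronglyMeasurable_comp_of_countable (f : α → ℝ) (hY : Measurable Y) :
    AEStronglyMeasurable (fun ω => f (Y ω)) P :=
  (Measurable.of_discrete.comp hY).aestronglyMeasurable

variable [IsProbabilityMeasure P]

lemma integrable_neg_log_map_singleton_iff (hY : Measurable Y) :
    Integrable (fun ω => -Real.log ((P.map Y) {Y ω}).toReal) P
      ↔ Summable fun a => Real.negMulLog ((P.map Y) {a}).toReal := by
  have := Measure.isProbabilityMeasure_map (μ := P) hY.aemeasurable
  rw [← integrable_neg_log_measure_singleton_iff,
    integrable_map_measure Measurable.of_discrete.aestronglyMeasurable hY.aemeasurable]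
  rfl

lemma integral_neg_log_map_singleton (hY : Measurable Y) :
    ∫ ω, -Real.log ((P.map Y) {Y ω}).toReal ∂P
      = ∑' a, Real.negMulLog ((P.map Y) {a}).toReal := by
  have := Measure.isProbabilityMeasure_map (μ := P) hY.aemeasurable
  rw [← integral_map (f := fun a => -Real.log ((P.map Y) {a}).toReal) hY.aemeasurable
    Measurable.of_discrete.aestronglyMeasurable]
  exact integral_neg_log_measure_singleton _

end RandomVariable

section WalkAlgebra

variable [Group Γ]

@[simp]
lemma walk_zero (x : Γ) (X : ℕ → Ω → Γ) (ω : Ω) : walk x X 0 ω = x := by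
  simp [walk]

lemma walk_succ (x : Γ) (X : ℕ → Ω → Γ) (n : ℕ) (ω : Ω) :
    walk x X (n + 1) ω = walk x X n ω * X n ω := by
  simp [walk, List.range_succ, mul_assoc]

lemma walk_add (x : Γ) (X : ℕ → Ω → Γ) (j k : ℕ) (ω : Ω) :
    walk x X (j + k) ω = walk x X j ω * walk 1 (fun i => X (j + i)) k ω := by
  simp [walk, List.range_add, mul_assoc, Function.comp_def]

lemma walk_congr (x : Γ) {X : ℕ → Ω → Γ} {n : ℕ} {ω ω' : Ω} (h : ∀ i < n, X i ω = X i ω') :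
    walk x X n ω = walk x X n ω' := by
  simp only [walk]
  congr 2
  exact List.map_congr_left fun i hi => h i (List.mem_range.1 hi)

end WalkAlgebra

section Measurability

variable [MeasurableSpace Γ]

lemma measurable_iSup_comap_Iio {X : ℕ → Ω → Γ} {k j : ℕ} (hkj : k < j) :
    Measurable[⨆ i ∈ Set.Iio j, MeasurableSpace.comap (X i) ‹_›] (X k) :=
  Measurable.of_comap_le <|
    le_iSup₂ (f := fun i (_ : i ∈ Set.Iio j) => MeasurableSpace.comap (X i) ‹_›) k hkj

variable [Group Γ] [Countable Γ] [MeasurableSingletonClass Γ]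

lemma measurable_walk {m : MeasurableSpace Ω} (x : Γ) {X : ℕ → Ω → Γ} {n : ℕ}
    (hX : ∀ k < n, Measurable (X k)) : Measurable (walk x X n) := by
  induction n with
  | zero => simp_rw [funext (walk_zero x X)]; exact measurable_const
  | succ n ih =>
    simp_rw [funext (walk_succ x X n)]
    exact (ih fun k hk => hX k (by omega)).mul (hX n n.lt_succ_self)

end Measurability

section MarkovProperty

variable [MeasurableSpace Γ] [MeasurableSpace Ω] {P : Measure Ω} {μ : Measure Γ} {X : ℕ → Ω → Γ}

lemma map_shift_eq_map (hmeas : ∀ k, Measurable (X k)) (hiid : iIndepFun X P)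
    (hlaw : ∀ k, P.map (X k) = μ) (j : ℕ) :
    P.map (fun ω i => X (j + i) ω) = P.map (fun ω i => X i ω) := by
  rw [(hiid.precomp (add_right_injective j)).map_fun_eq_infinitePi_map (fun i => hmeas _),
    hiid.map_fun_eq_infinitePi_map hmeas]
  simp [hlaw]

variable [Group Γ] [Countable Γ] [MeasurableSingletonClass Γ]

lemma measure_walk_shift_eq (hmeas : ∀ k, Measurable (X k)) (hiid : iIndepFun X P)
    (hlaw : ∀ k, P.map (X k) = μ) (j k : ℕ) (y : Γ) :
    P {ω | walk 1 (fun i => X (j + i)) k ω = y} = P {ω | walk 1 X k ω = y} := by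
  -- both events are the preimage of `S` under a sequence of increments with the same joint law
  let S : Set (ℕ → Γ) := {s | walk 1 (fun i s => s i) k s = y}
  have hS : MeasurableSet S :=
    measurable_walk 1 (fun i _ => measurable_pi_apply i) (measurableSet_singleton y)
  have h := congrArg (fun ν : Measure (ℕ → Γ) => ν S) (map_shift_eq_map hmeas hiid hlaw j)
  rwa [Measure.map_apply (measurable_pi_lambda _ fun i => hmeas _) hS,
    Measure.map_apply (measurable_pi_lambda _ hmeas) hS] at h

lemma measure_inter_walk_shift_eq_mul (hmeas : ∀ k, Measurable (X k)) (hiid : iIndepFun X P)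
    (hlaw : ∀ k, P.map (X k) = μ) {j : ℕ} {A : Set Ω}
    (hA : MeasurableSet[⨆ i ∈ Set.Iio j, MeasurableSpace.comap (X i) ‹_›] A) (k : ℕ) (y : Γ) :
    P (A ∩ {ω | walk 1 (fun i => X (j + i)) k ω = y}) = P A * P {ω | walk 1 X k ω = y} := by
  have hindep := indep_iSup_of_disjoint (fun i => (hmeas i).comap_le)
    ((iIndepFun_iff_iIndep _ _ _).1 hiid) (Set.Iio_disjoint_Ici le_rfl : Disjoint _ (Set.Ici j))
  have hfuture : Measurable[⨆ i ∈ Set.Ici j, MeasurableSpace.comap (X i) ‹_›]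
      (walk 1 (fun i => X (j + i)) k) :=
    measurable_walk 1 fun i _ => Measurable.of_comap_le <|
      le_iSup₂ (f := fun i (_ : i ∈ Set.Ici j) => MeasurableSpace.comap (X i) ‹_›) (j + i)
        (by simp)
  rw [← measure_walk_shift_eq hmeas hiid hlaw j]
  exact (Indep_iff _ _ _).1 hindep _ _ hA (hfuture (measurableSet_singleton y))

end MarkovProperty

section FirstHit

variable [Group Γ] {X : ℕ → Ω → Γ}

def firstHit (X : ℕ → Ω → Γ) (x : Γ) (j : ℕ) : Set Ω :=
  {ω | walk 1 X j ω = x ∧ ∀ i < j, walk 1 X i ω ≠ x}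

lemma pairwise_disjoint_firstHit (X : ℕ → Ω → Γ) (x : Γ) :
    Pairwise (Function.onFun Disjoint (firstHit X x)) := by
  intro a b hab
  refine Set.disjoint_left.2 fun ω ha hb => ?_
  rcases hab.lt_or_gt with h | h
  exacts [hb.2 a h ha.1, ha.2 b h hb.1]

lemma setOf_walk_eq_subset_iUnion_firstHit (x : Γ) (m : ℕ) :
    {ω | walk 1 X m ω = x} ⊆ ⋃ p ∈ antidiagonal m,
      firstHit X x p.1 ∩ {ω | walk 1 (fun i => X (p.1 + i)) p.2 ω = 1} := by
  classical
  intro ω hm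
  have hex : ∃ j, walk 1 X j ω = x := ⟨m, hm⟩
  obtain ⟨l, hl⟩ := Nat.exists_eq_add_of_le (Nat.find_min' hex hm)
  refine Set.mem_biUnion (x := (Nat.find hex, l)) (by simp [hl])
    ⟨⟨Nat.find_spec hex, fun i hi => Nat.find_min hex hi⟩, ?_⟩
  have h := walk_add 1 X (Nat.find hex) l ω
  rw [← hl, hm, Nat.find_spec hex] at h
  exact left_eq_mul.mp h

variable [MeasurableSpace Γ] [Countable Γ] [MeasurableSingletonClass Γ]

lemma measurableSet_firstHit {m : MeasurableSpace Ω} (x : Γ) {j : ℕ}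
    (hX : ∀ k < j, Measurable (X k)) : MeasurableSet (firstHit X x j) := by
  simp only [firstHit, Set.ofPred_and, Set.ofPred_forall]
  exact (measurable_walk 1 hX (measurableSet_singleton x)).inter <|
    .iInter fun i => .iInter fun hi =>
      (measurable_walk 1 (fun k hk => hX k (hk.trans hi)) (measurableSet_singleton x)).compl

end FirstHit

section GreenFunction

variable [Group Γ] [MeasurableSpace Ω] {P : Measure Ω} {X : ℕ → Ω → Γ}

lemma one_le_greenFn_one [IsProbabilityMeasure P] : 1 ≤ greenFn P X 1 1 :=
  le_of_eq_of_le (by simp) (ENNReal.le_tsum 0)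

variable [MeasurableSpace Γ] [Countable Γ] [MeasurableSingletonClass Γ] {μ : Measure Γ}

lemma measure_walk_mul_le (hmeas : ∀ k, Measurable (X k)) (hiid : iIndepFun X P)
    (hlaw : ∀ k, P.map (X k) = μ) (n k : ℕ) (x y : Γ) :
    P {ω | walk 1 X n ω = x} * P {ω | walk 1 X k ω = y}
      ≤ P {ω | walk 1 X (n + k) ω = x * y} :=
  calc P {ω | walk 1 X n ω = x} * P {ω | walk 1 X k ω = y}
      = P ({ω | walk 1 X n ω = x} ∩ {ω | walk 1 (fun i => X (n + i)) k ω = y}) :=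
        (measure_inter_walk_shift_eq_mul hmeas hiid hlaw
          (measurable_walk 1 (fun _ hk => measurable_iSup_comap_Iio hk) (measurableSet_singleton x))
          k y).symm
    _ ≤ P {ω | walk 1 X (n + k) ω = x * y} :=
        measure_mono fun ω ⟨hx, hy⟩ => by
          simp only [Set.mem_ofPred_eq] at hx hy ⊢
          rw [walk_add, hx, hy]

lemma measure_walk_mul_greenFn_le (hmeas : ∀ k, Measurable (X k)) (hiid : iIndepFun X P)
    (hlaw : ∀ k, P.map (X k) = μ) (n : ℕ) (x : Γ) :
    P {ω | walk 1 X n ω = x} * greenFn P X 1 1 ≤ greenFn P X 1 x := by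
  rw [greenFn, greenFn, ← ENNReal.tsum_mul_left]
  calc ∑' k, P {ω | walk 1 X n ω = x} * P {ω | walk 1 X k ω = 1}
      ≤ ∑' k, P {ω | walk 1 X (n + k) ω = x} :=
        ENNReal.tsum_le_tsum fun k => by simpa using measure_walk_mul_le hmeas hiid hlaw n k x 1
    _ ≤ ∑' m, P {ω | walk 1 X m ω = x} :=
        ENNReal.tsum_comp_le_tsum_of_injective (add_right_injective n) _

-- Decompose at the first visit to `x` and restart the walk there.
lemma greenFn_le_hitProb_mul_greenFn (hmeas : ∀ k, Measurable (X k)) (hiid : iIndepFun X P)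
    (hlaw : ∀ k, P.map (X k) = μ) (x : Γ) :
    greenFn P X 1 x ≤ hitProb P X 1 x * greenFn P X 1 1 := by
  have hdecomp : ∀ m, P {ω | walk 1 X m ω = x}
      ≤ ∑ p ∈ antidiagonal m, P (firstHit X x p.1) * P {ω | walk 1 X p.2 ω = 1} :=
    fun m => calc
      _ ≤ P (⋃ p ∈ antidiagonal m,
            firstHit X x p.1 ∩ {ω | walk 1 (fun i => X (p.1 + i)) p.2 ω = 1}) :=
          measure_mono (setOf_walk_eq_subset_iUnion_firstHit x m)
      _ ≤ _ := measure_biUnion_finset_le _ _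
      _ = _ := Finset.sum_congr rfl fun p _ => measure_inter_walk_shift_eq_mul hmeas hiid hlaw
          (measurableSet_firstHit x fun _ hk => measurable_iSup_comap_Iio hk) p.2 1
  have hfirst : ∑' j, P (firstHit X x j) ≤ hitProb P X 1 x := by
    rw [← measure_iUnion (pairwise_disjoint_firstHit X x)
      fun j => measurableSet_firstHit x fun k _ => hmeas k]
    exact measure_mono (Set.iUnion_subset fun j ω hω => ⟨j, hω.1⟩)
  calc greenFn P X 1 x
      ≤ ∑' m, ∑ p ∈ antidiagonal m,
          P (firstHit X x p.1) * P {ω | walk 1 X p.2 ω = 1} := ENNReal.tsum_le_tsum hdecomp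
    _ = (∑' j, P (firstHit X x j)) * greenFn P X 1 1 :=
        (ENNReal.tsum_mul_tsum_eq_tsum_sum_antidiagonal (fun j => P (firstHit X x j))
          fun k => P {ω | walk 1 X k ω = 1}).symm
    _ ≤ hitProb P X 1 x * greenFn P X 1 1 := mul_le_mul_left hfirst _

variable [IsProbabilityMeasure P]

lemma greenFn_le_greenFn_one (hmeas : ∀ k, Measurable (X k)) (hiid : iIndepFun X P)
    (hlaw : ∀ k, P.map (X k) = μ) (x : Γ) : greenFn P X 1 x ≤ greenFn P X 1 1 :=
  (greenFn_le_hitProb_mul_greenFn hmeas hiid hlaw x).trans (mul_le_of_le_one_left' prob_le_one)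

end GreenFunction

section WalkEntropy

variable [Group Γ] [MeasurableSpace Γ] [MeasurableSingletonClass Γ] [MeasurableSpace Ω]
  {P : Measure Ω} {μ : Measure Γ} {X : ℕ → Ω → Γ}

lemma prod_measure_singleton_le_measure_walk (hmeas : ∀ k, Measurable (X k))
    (hiid : iIndepFun X P) (hlaw : ∀ k, P.map (X k) = μ) (n : ℕ) (ω : Ω) :
    ∏ i ∈ Finset.range n, μ {X i ω} ≤ P {ω' | walk 1 X n ω' = walk 1 X n ω} :=
  calc ∏ i ∈ Finset.range n, μ {X i ω} = P (⋂ i ∈ Finset.range n, X i ⁻¹' {X i ω}) := by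
        rw [hiid.measure_inter_preimage_eq_mul _ fun i _ => measurableSet_singleton _]
        exact Finset.prod_congr rfl fun i _ => by
          rw [← hlaw i, Measure.map_apply (hmeas i) (measurableSet_singleton _)]
    _ ≤ _ := measure_mono fun ω' hω' => show walk 1 X n ω' = walk 1 X n ω from
          walk_congr 1 fun i hi => by simpa using Set.mem_iInter₂.1 hω' i (Finset.mem_range.2 hi)

variable [Countable Γ] [IsProbabilityMeasure P] [IsProbabilityMeasure μ]

lemma ae_neg_log_map_walk_le (hmeas : ∀ k, Measurable (X k)) (hiid : iIndepFun X P)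
    (hlaw : ∀ k, P.map (X k) = μ) (n : ℕ) :
    ∀ᵐ ω ∂P, -Real.log ((P.map (walk 1 X n)) {walk 1 X n ω}).toReal
      ≤ ∑ i ∈ Finset.range n, -Real.log (μ {X i ω}).toReal := by
  have hpos : ∀ᵐ ω ∂P, ∀ i, μ {X i ω} ≠ 0 := ae_all_iff.2 fun i => by
    simpa only [hlaw i] using ae_map_singleton_ne_zero (P := P) (hmeas i)
  filter_upwards [hpos] with ω hω
  have hprod : 0 < (∏ i ∈ Finset.range n, μ {X i ω}).toReal :=
    ENNReal.toReal_pos (Finset.prod_ne_zero_iff.2 fun i _ => hω i)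
      (ENNReal.prod_ne_top fun i _ => measure_ne_top μ _)
  rw [Measure.map_apply (measurable_walk 1 fun k _ => hmeas k) (measurableSet_singleton _)]
  calc -Real.log (P (walk 1 X n ⁻¹' {walk 1 X n ω})).toReal
      ≤ -Real.log (∏ i ∈ Finset.range n, μ {X i ω}).toReal :=
        neg_le_neg <| Real.log_le_log hprod <| ENNReal.toReal_mono (measure_ne_top _ _)
          (prod_measure_singleton_le_measure_walk hmeas hiid hlaw n ω)
    _ = ∑ i ∈ Finset.range n, -Real.log (μ {X i ω}).toReal := by
        rw [ENNReal.toReal_prod, Real.log_prod fun i _ =>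
          (ENNReal.toReal_pos (hω i) (measure_ne_top _ _)).ne', Finset.sum_neg_distrib]

lemma integrable_neg_log_map_walk (hmeas : ∀ k, Measurable (X k)) (hiid : iIndepFun X P)
    (hlaw : ∀ k, P.map (X k) = μ) (hent : Summable fun g => Real.negMulLog (μ {g}).toReal)
    (n : ℕ) : Integrable (fun ω => -Real.log ((P.map (walk 1 X n)) {walk 1 X n ω}).toReal) P := by
  have hstep : ∀ i, Integrable (fun ω => -Real.log (μ {X i ω}).toReal) P := fun i => by
    have h := (integrable_neg_log_map_singleton_iff (hmeas i)).2 (by rwa [hlaw i])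
    rwa [hlaw i] at h
  refine (integrable_finsetSum (Finset.range n) fun i _ => hstep i).mono'
    ((measurable_walk 1 fun k _ => hmeas k).aestronglyMeasurable_comp_of_countable
      fun y => -Real.log ((P.map (walk 1 X n)) {y}).toReal) ?_
  filter_upwards [ae_neg_log_map_walk_le hmeas hiid hlaw n] with ω hω
  rwa [Real.norm_of_nonneg (neg_log_toReal_nonneg prob_le_one)]

end WalkEntropy

section GreenDistance

variable [Group Γ] [MeasurableSpace Ω] {P : Measure Ω} [IsProbabilityMeasure P]
  {X : ℕ → Ω → Γ}

lemma greenDist_nonneg (x y : Γ) : 0 ≤ greenDist P X x y :=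
  neg_log_toReal_nonneg prob_le_one

lemma greenDist_le_neg_log_measure_walk {n : ℕ} {x y : Γ} (h : P {ω | walk x X n ω = y} ≠ 0) :
    greenDist P X x y ≤ -Real.log (P {ω | walk x X n ω = y}).toReal :=
  neg_le_neg <| Real.log_le_log (ENNReal.toReal_pos h (measure_ne_top _ _)) <|
    ENNReal.toReal_mono (measure_ne_top _ _) (measure_mono fun _ hω => ⟨n, hω⟩)

variable [MeasurableSpace Γ] [Countable Γ] [MeasurableSingletonClass Γ]

lemma integral_greenDist_walk_le (hmeas : ∀ k, Measurable (X k)) (n : ℕ)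
    (hint : Integrable (fun ω => -Real.log ((P.map (walk 1 X n)) {walk 1 X n ω}).toReal) P) :
    ∫ ω, greenDist P X 1 (walk 1 X n ω) ∂P
      ≤ ∫ ω, -Real.log ((P.map (walk 1 X n)) {walk 1 X n ω}).toReal ∂P := by
  have hZ : Measurable (walk 1 X n) := measurable_walk 1 fun k _ => hmeas k
  have hle : ∀ᵐ ω ∂P, greenDist P X 1 (walk 1 X n ω)
      ≤ -Real.log ((P.map (walk 1 X n)) {walk 1 X n ω}).toReal := by
    filter_upwards [ae_map_singleton_ne_zero hZ] with ω hω
    rw [Measure.map_apply hZ (measurableSet_singleton _)] at hω ⊢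
    exact greenDist_le_neg_log_measure_walk hω
  refine integral_mono_ae
    (hint.mono' (hZ.aestronglyMeasurable_comp_of_countable (greenDist P X 1)) ?_) hint hle
  filter_upwards [hle] with ω hω
  rwa [Real.norm_of_nonneg (greenDist_nonneg _ _)]

end GreenDistance

theorem expected_greenDist_le_entropy_general
    [Group Γ] [Countable Γ] [MeasurableSpace Γ] [MeasurableSingletonClass Γ]
    [MeasurableSpace Ω] (P : Measure Ω) [IsProbabilityMeasure P]
    (μ : Measure Γ) [IsProbabilityMeasure μ]
    (X : ℕ → Ω → Γ) (hmeas : ∀ k, Measurable (X k))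
    (hiid : iIndepFun (m := fun _ => ‹MeasurableSpace Γ›) X P)
    (hlaw : ∀ k, Measure.map (X k) P = μ)
    (hent : Summable fun g : Γ => Real.negMulLog (μ {g}).toReal) :
    ∀ n : ℕ,
      (∫ ω, greenDist P X 1 (walk 1 X n ω) ∂P
        ≤ ∫ ω, - Real.log ((Measure.map (walk 1 X n) P) {walk 1 X n ω}).toReal ∂P) ∧
      (∫ ω, - Real.log ((Measure.map (walk 1 X n) P) {walk 1 X n ω}).toReal ∂P
        = ∑' x : Γ, Real.negMulLog ((Measure.map (walk 1 X n) P) {x}).toReal) ∧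
      ((∑' x : Γ, ((Measure.map (walk 1 X n) P) {x}).toReal *
          (- Real.log (∑' k : ℕ, ((Measure.map (walk 1 X k) P) {x}).toReal)))
          + Real.log (greenFn P X 1 1).toReal
        ≤ ∑' x : Γ, Real.negMulLog ((Measure.map (walk 1 X n) P) {x}).toReal) := by
  intro n
  have hZ : ∀ k, Measurable (walk 1 X k) := fun k => measurable_walk 1 fun i _ => hmeas i
  have hint := integrable_neg_log_map_walk hmeas hiid hlaw hent n
  have hgreen : ∀ x, ∑' k, ((P.map (walk 1 X k)) {x}).toReal = (greenFn P X 1 x).toReal :=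
    fun x => by
      rw [greenFn, ENNReal.tsum_toReal_eq fun k => measure_ne_top _ _]
      exact tsum_congr fun k => by rw [Measure.map_apply (hZ k) (measurableSet_singleton x)]; rfl
  refine ⟨integral_greenDist_walk_le hmeas n hint, integral_neg_log_map_singleton (hZ n), ?_⟩
  have := Measure.isProbabilityMeasure_map (μ := P) (hZ n).aemeasurable
  simp_rw [hgreen]
  refine tsum_toReal_mul_neg_log_add_log_le (by rw [tsum_measure_singleton, measure_univ])
    ((integrable_neg_log_map_singleton_iff (hZ n)).1 hint) one_le_greenFn_one (fun x => ?_)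
    (greenFn_le_greenFn_one hmeas hiid hlaw)
  rw [Measure.map_apply (hZ n) (measurableSet_singleton x)]
  exact measure_walk_mul_greenFn_le hmeas hiid hlaw n x

/-- for every `n`, `E[d_G(e,Z_n)] ≤ E[-ln μⁿ(Z_n)] = H(μⁿ)`;
consequently `Σ_x μⁿ(x)(-ln Σ_k μᵏ(x)) + ln G(e,e) ≤ H(μⁿ)`. -/
theorem expected_greenDist_le_entropy
    [Group Γ] [Countable Γ] [MeasurableSpace Γ] [MeasurableSingletonClass Γ]
    [MeasurableSpace Ω] (P : Measure Ω) [IsProbabilityMeasure P]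
    (μ : Measure Γ) [IsProbabilityMeasure μ]
    (X : ℕ → Ω → Γ) (hmeas : ∀ k, Measurable (X k))
    (hiid : iIndepFun (m := fun _ => ‹MeasurableSpace Γ›) X P)
    (hlaw : ∀ k, Measure.map (X k) P = μ)
    (hgen : Subgroup.closure {g : Γ | μ {g} ≠ 0} = ⊤)
    (htrans : P {ω | ∃ n ≥ 1, walk 1 X n ω = 1} < 1)
    (hent : Summable fun g : Γ => Real.negMulLog (μ {g}).toReal) :
    ∀ n : ℕ,
      (∫ ω, greenDist P X 1 (walk 1 X n ω) ∂P
        ≤ ∫ ω, - Real.log ((Measure.map (walk 1 X n) P) {walk 1 X n ω}).toReal ∂P) ∧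
      (∫ ω, - Real.log ((Measure.map (walk 1 X n) P) {walk 1 X n ω}).toReal ∂P
        = ∑' x : Γ, Real.negMulLog ((Measure.map (walk 1 X n) P) {x}).toReal) ∧
      ((∑' x : Γ, ((Measure.map (walk 1 X n) P) {x}).toReal *
          (- Real.log (∑' k : ℕ, ((Measure.map (walk 1 X k) P) {x}).toReal)))
          + Real.log (greenFn P X 1 1).toReal
        ≤ ∑' x : Γ, Real.negMulLog ((Measure.map (walk 1 X n) P) {x}).toReal) :=
  expected_greenDist_le_entropy_general P μ X hmeas hiid hlaw hent
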